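/- arXiv:1302.4776 — 6 statements merged into one kernel-verified Lean document; each statement's English description precedes it below -/
import Mathlib

section
/- For any two full-support probability distributions p_1, p_2 on 𝒴, 2·B(p_1, p_2) = min_{q ∈ P(𝒴)} ( D(q‖p_1) + D(q‖p_2) ), where the minimum is over all probability distributions q on 𝒴. Moreover, the minimum is achieved by q⋆(y) = p_1(y)^{1/2} p_2(y)^{1/2} / Σ_{y'∈𝒴} p_1(y')^{1/2} p_2(y')^{1/2}. -/
open Filter Finset Topology

noncomputable section

/-- `p` is a probability distribution on the finite alphabet. -/
def IsProb {𝓨 : Type} [Fintype 𝓨] (p : 𝓨 → ℝ) : Prop :=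
  (∀ y, 0 ≤ p y) ∧ ∑ y, p y = 1

/-- `p` has full support. -/
def FullSupport {𝓨 : Type} (p : 𝓨 → ℝ) : Prop := ∀ y, 0 < p y

/-- Relative entropy `D(q‖p)` (natural log, convention `0·log 0 = 0`,
which holds since `Real.log 0 = 0` in Mathlib). -/
def KL {𝓨 : Type} [Fintype 𝓨] (q p : 𝓨 → ℝ) : ℝ :=
  ∑ y, q y * Real.log (q y / p y)

/-- Bhattacharyya distance `B(p,q) = -log ∑ √(p y) √(q y)`. -/
def Bhat {𝓨 : Type} [Fintype 𝓨] (p q : 𝓨 → ℝ) : ℝ :=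
  - Real.log (∑ y, Real.sqrt (p y) * Real.sqrt (q y))

/-!
Let `Z = ∑ √(p₁ y) √(p₂ y)` and `q⋆ = √p₁ √p₂ / Z`. Since
`log(q/p₁) + log(q/p₂) = 2 log(q/q⋆) - 2 log Z` pointwise, every probability vector `q` satisfies
`D(q‖p₁) + D(q‖p₂) = 2 D(q‖q⋆) + 2 B(p₁,p₂)`, and Gibbs' inequality `D(q‖q⋆) ≥ 0`, with equality
at `q = q⋆`, gives both claims.
-/

open Real

lemma sub_le_mul_log_div {x y : ℝ} (hx : 0 ≤ x) (hy : 0 < y) : x - y ≤ x * log (x / y) := by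
  rcases hx.eq_or_lt with rfl | hx
  · simpa using hy.le
  calc x - y = x * (1 - (x / y)⁻¹) := by field_simp
    _ ≤ x * log (x / y) := by gcongr; exact one_sub_inv_le_log_of_pos (div_pos hx hy)

lemma mul_log_div_add_mul_log_div (x : ℝ) {a b c : ℝ} (ha : 0 < a) (hb : 0 < b) (hc : 0 < c) :
    x * log (x / a) + x * log (x / b) = 2 * (x * log (x / (√a * √b / c))) - 2 * x * log c := by
  rcases eq_or_ne x 0 with rfl | hx
  · simp
  have hab : 0 < √a * √b := mul_pos (sqrt_pos.2 ha) (sqrt_pos.2 hb)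
  rw [log_div hx ha.ne', log_div hx hb.ne', log_div hx (div_pos hab hc).ne',
    log_div hab.ne' hc.ne', log_mul (sqrt_pos.2 ha).ne' (sqrt_pos.2 hb).ne',
    log_sqrt ha.le, log_sqrt hb.le]
  ring

section

variable {𝓨 : Type} [Fintype 𝓨]

def bhatCoeff (p₁ p₂ : 𝓨 → ℝ) : ℝ := ∑ y, √(p₁ y) * √(p₂ y)

def geometricMixture (p₁ p₂ : 𝓨 → ℝ) (y : 𝓨) : ℝ := √(p₁ y) * √(p₂ y) / bhatCoeff p₁ p₂

lemma KL_self (p : 𝓨 → ℝ) : KL p p = 0 := by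
  refine Finset.sum_eq_zero fun y _ => ?_
  rcases eq_or_ne (p y) 0 with h | h <;> simp [h]

lemma KL_nonneg {q p : 𝓨 → ℝ} (hq : ∀ y, 0 ≤ q y) (hp : FullSupport p)
    (hsum : ∑ y, p y ≤ ∑ y, q y) : 0 ≤ KL q p :=
  calc (0 : ℝ) ≤ ∑ y, (q y - p y) := by rw [Finset.sum_sub_distrib]; linarith
    _ ≤ KL q p := Finset.sum_le_sum fun y _ => sub_le_mul_log_div (hq y) (hp y)

lemma bhatCoeff_pos [Nonempty 𝓨] {p₁ p₂ : 𝓨 → ℝ} (hp₁ : FullSupport p₁) (hp₂ : FullSupport p₂) :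
    0 < bhatCoeff p₁ p₂ :=
  Finset.sum_pos (fun y _ => mul_pos (sqrt_pos.2 (hp₁ y)) (sqrt_pos.2 (hp₂ y)))
    Finset.univ_nonempty

lemma fullSupport_geometricMixture [Nonempty 𝓨] {p₁ p₂ : 𝓨 → ℝ} (hp₁ : FullSupport p₁)
    (hp₂ : FullSupport p₂) : FullSupport (geometricMixture p₁ p₂) := fun y =>
  div_pos (mul_pos (sqrt_pos.2 (hp₁ y)) (sqrt_pos.2 (hp₂ y))) (bhatCoeff_pos hp₁ hp₂)

lemma isProb_geometricMixture [Nonempty 𝓨] {p₁ p₂ : 𝓨 → ℝ} (hp₁ : FullSupport p₁)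
    (hp₂ : FullSupport p₂) : IsProb (geometricMixture p₁ p₂) := by
  refine ⟨fun y => (fullSupport_geometricMixture hp₁ hp₂ y).le, ?_⟩
  simp only [geometricMixture]
  rw [← Finset.sum_div, ← bhatCoeff, div_self (bhatCoeff_pos hp₁ hp₂).ne']

lemma KL_add_KL_eq [Nonempty 𝓨] {q p₁ p₂ : 𝓨 → ℝ} (hq : ∑ y, q y = 1)
    (hp₁ : FullSupport p₁) (hp₂ : FullSupport p₂) :
    KL q p₁ + KL q p₂ = 2 * KL q (geometricMixture p₁ p₂) + 2 * Bhat p₁ p₂ := by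
  have hZ := bhatCoeff_pos hp₁ hp₂
  calc KL q p₁ + KL q p₂
      = ∑ y, (2 * (q y * log (q y / geometricMixture p₁ p₂ y))
          - 2 * q y * log (bhatCoeff p₁ p₂)) := by
        rw [KL, KL, ← Finset.sum_add_distrib]
        exact Finset.sum_congr rfl fun y _ => mul_log_div_add_mul_log_div _ (hp₁ y) (hp₂ y) hZ
    _ = 2 * KL q (geometricMixture p₁ p₂) + 2 * Bhat p₁ p₂ := by
        rw [Finset.sum_sub_distrib, ← Finset.mul_sum, ← Finset.sum_mul, ← Finset.mul_sum, hq,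
          KL, Bhat, ← bhatCoeff]
        ring

end

theorem statement1_general (𝓨 : Type) [Fintype 𝓨] [Nonempty 𝓨]
    (p₁ p₂ : 𝓨 → ℝ)
    (hf₁ : FullSupport p₁) (hf₂ : FullSupport p₂) :
    IsLeast {x : ℝ | ∃ q : 𝓨 → ℝ, IsProb q ∧ x = KL q p₁ + KL q p₂}
      (2 * Bhat p₁ p₂) ∧
    KL (fun y => Real.sqrt (p₁ y) * Real.sqrt (p₂ y) /
          ∑ y', Real.sqrt (p₁ y') * Real.sqrt (p₂ y')) p₁ +
      KL (fun y => Real.sqrt (p₁ y) * Real.sqrt (p₂ y) /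
          ∑ y', Real.sqrt (p₁ y') * Real.sqrt (p₂ y')) p₂
      = 2 * Bhat p₁ p₂ := by
  have hqStar := isProb_geometricMixture hf₁ hf₂
  have hattained : KL (geometricMixture p₁ p₂) p₁ + KL (geometricMixture p₁ p₂) p₂
      = 2 * Bhat p₁ p₂ := by
    rw [KL_add_KL_eq hqStar.2 hf₁ hf₂, KL_self]
    ring
  refine ⟨⟨⟨_, hqStar, hattained.symm⟩, ?_⟩, hattained⟩
  rintro _ ⟨q, hq, rfl⟩
  rw [KL_add_KL_eq hq.2 hf₁ hf₂]
  have hGibbs := KL_nonneg hq.1 (fullSupport_geometricMixture hf₁ hf₂) (by rw [hqStar.2, hq.2])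
  linarith

/-- Lemma 2. `2B(p₁,p₂) = min_q (D(q‖p₁) + D(q‖p₂))`, and the
minimum is achieved by `q⋆(y) = √(p₁ y) √(p₂ y) / ∑_{y'} √(p₁ y') √(p₂ y')`. -/
theorem statement1 (𝓨 : Type) [Fintype 𝓨] [Nonempty 𝓨]
    (p₁ p₂ : 𝓨 → ℝ) (h₁ : IsProb p₁) (h₂ : IsProb p₂)
    (hf₁ : FullSupport p₁) (hf₂ : FullSupport p₂) :
    IsLeast {x : ℝ | ∃ q : 𝓨 → ℝ, IsProb q ∧ x = KL q p₁ + KL q p₂}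
      (2 * Bhat p₁ p₂) ∧
    KL (fun y => Real.sqrt (p₁ y) * Real.sqrt (p₂ y) /
          ∑ y', Real.sqrt (p₁ y') * Real.sqrt (p₂ y')) p₁ +
      KL (fun y => Real.sqrt (p₁ y) * Real.sqrt (p₂ y) /
          ∑ y', Real.sqrt (p₁ y') * Real.sqrt (p₂ y')) p₂
      = 2 * Bhat p₁ p₂ :=
  statement1_general 𝓨 p₁ p₂ hf₁ hf₂
end
end

section
/- (Converse part of Theorem 1.) Fix M ≥ 3 and full-support probability distributions μ ≠ π on 𝒴. For every sequence of tests δ_n : (𝒴^M)^n → {1,…,M} (n = 1, 2, …), the exponent of the maximal error probability satisfies limsup_{n→∞} −(1/n) log e_n(δ_n) ≤ 2·B(μ, π). -/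
open Filter Finset Topology

noncomputable section

/-- Probability of an event under a pmf on a finite sample space. -/
def probOf {α : Type} [Fintype α] (P : α → ℝ) (A : Set α) : ℝ :=
  ∑ y, A.indicator P y

/-- Joint pmf of all observations in the one-outlier model under hypothesis `i`:
coordinate `i` is the outlier (distribution `μ`), all others typical (`π`). -/
def pOne {𝓨 : Type} [Fintype 𝓨] {M n : ℕ} (μ π : 𝓨 → ℝ) (i : Fin M)
    (y : Fin n → Fin M → 𝓨) : ℝ :=
  ∏ k, ∏ j, (if j = i then μ else π) (y k j)

/-- Maximal error probability of a test in the one-outlier model. -/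
def errOne {𝓨 : Type} [Fintype 𝓨] {M n : ℕ} (μ π : 𝓨 → ℝ)
    (δ : (Fin n → Fin M → 𝓨) → Fin M) : ℝ :=
  ⨆ i : Fin M, probOf (pOne μ π i) {y | δ y ≠ i}

/-!
Fix two hypotheses `i ≠ j` with single-sample laws `Pᵢ, Pⱼ` and put `g = √(Pᵢ Pⱼ)`,
`L = log Pᵢ - log Pⱼ`, so that `Pᵢ = g e^{L/2}` and `Pⱼ = g e^{-L/2}`. At every observation a
test errs under `i` or under `j`, hence `2 eₙ ≥ ∑ min(Pᵢⁿ, Pⱼⁿ) = ∑ gⁿ e^{-|S|/2}`, where `S` is the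
summed log-likelihood ratio. The mass of `gⁿ` is `ρ^{2n}` with `ρ = e^{-B(μ,π)}`, since only the
coordinates `i` and `j` differ. Jensen's inequality for the normalised `gⁿ` bounds the sum below by
`ρ^{2n} exp(-½ √(E S²))`. Swapping coordinates `i` and `j` shows that `L` has mean zero under `g`,
so `E S² = n E L²`, and the error exponent exceeds `2B(μ,π)` by `O(1/√n)` only.
-/

section TwoPoint
open Real

theorem min_exp_half_exp_neg_half (x : ℝ) :
    min (exp (x / 2)) (exp (-x / 2)) = exp (-|x| / 2) := by
  rcases le_total 0 x with hx | hx
  · rw [abs_of_nonneg hx, min_eq_right (exp_le_exp.2 (by linarith))]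
  · rw [abs_of_nonpos hx, neg_neg, min_eq_left (exp_le_exp.2 (by linarith))]

theorem exp_neg_sqrt_le_sum_mul_exp_neg_abs {ι : Type*} (s : Finset ι) (w L : ι → ℝ)
    (hw₀ : ∀ i ∈ s, 0 ≤ w i) (hw₁ : ∑ i ∈ s, w i = 1) :
    exp (-√(∑ i ∈ s, w i * L i ^ 2) / 2) ≤ ∑ i ∈ s, w i * exp (-|L i| / 2) := by
  have hmean : ∑ i ∈ s, w i * |L i| ≤ √(∑ i ∈ s, w i * L i ^ 2) := by
    refine le_sqrt_of_sq_le ?_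
    simpa [sq_abs] using (even_two.convexOn_pow (𝕜 := ℝ)).map_sum_le hw₀ hw₁
      (p := fun i => |L i|) fun _ _ => Set.mem_univ _
  calc exp (-√(∑ i ∈ s, w i * L i ^ 2) / 2)
      ≤ exp (∑ i ∈ s, w i * (-|L i| / 2)) := by
        refine exp_le_exp.2 ?_
        rw [show ∑ i ∈ s, w i * (-|L i| / 2) = -(∑ i ∈ s, w i * |L i|) / 2 by
          rw [neg_div, Finset.sum_div, ← Finset.sum_neg_distrib]
          exact Finset.sum_congr rfl fun i _ => by ring]
        linarith
    _ ≤ ∑ i ∈ s, w i * exp (-|L i| / 2) :=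
        convexOn_exp.map_sum_le hw₀ hw₁ fun _ _ => Set.mem_univ _

theorem sum_mul_exp_neg_sqrt_le_sum_min {α : Type*} [Fintype α] (g L : α → ℝ)
    (hg : ∀ x, 0 ≤ g x) (hZ : 0 < ∑ x, g x) :
    (∑ x, g x) * exp (-√((∑ x, g x * L x ^ 2) / ∑ x, g x) / 2)
      ≤ ∑ x, min (g x * exp (L x / 2)) (g x * exp (-L x / 2)) := by
  set Z := ∑ x, g x
  have hw₁ : ∑ x, g x / Z = 1 := by rw [← Finset.sum_div, div_self hZ.ne']
  have hjensen := exp_neg_sqrt_le_sum_mul_exp_neg_abs Finset.univ (fun x => g x / Z) L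
    (fun x _ => div_nonneg (hg x) hZ.le) hw₁
  simp only [div_mul_eq_mul_div, ← Finset.sum_div] at hjensen
  rw [le_div_iff₀ hZ, mul_comm] at hjensen
  simpa only [← mul_min_of_nonneg _ _ (hg _), min_exp_half_exp_neg_half] using hjensen

theorem sqrt_mul_mul_exp_log_sub_div_two {a b : ℝ} (ha : 0 < a) (hb : 0 < b) :
    √(a * b) * exp ((log a - log b) / 2) = a := by
  rw [← exp_log (mul_pos ha hb), ← exp_half, ← exp_add, log_mul ha.ne' hb.ne',
    show (log a + log b) / 2 + (log a - log b) / 2 = log a by ring, exp_log ha]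

theorem sum_sqrt_mul_mul_log_sub_eq_zero {α : Type*} [Fintype α] (P Q : α → ℝ) (e : α ≃ α)
    (hP : ∀ x, P (e x) = Q x) (hQ : ∀ x, Q (e x) = P x) :
    ∑ x, √(P x * Q x) * (log (P x) - log (Q x)) = 0 := by
  have hsum := e.sum_comp fun x => √(P x * Q x) * (log (P x) - log (Q x))
  have hanti : ∀ x, √(P (e x) * Q (e x)) * (log (P (e x)) - log (Q (e x)))
      = -(√(P x * Q x) * (log (P x) - log (Q x))) := fun x => by
    rw [hP, hQ, mul_comm (Q x)]
    ring
  rw [Fintype.sum_congr _ _ hanti, Finset.sum_neg_distrib] at hsum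
  linarith

end TwoPoint

theorem probOf_le_sum {α : Type} [Fintype α] {P : α → ℝ} (hP : ∀ x, 0 ≤ P x) (A : Set α) :
    probOf P A ≤ ∑ x, P x :=
  Finset.sum_le_sum fun x _ => Set.indicator_le_self' (fun y _ => hP y) x

theorem sum_min_le_probOf_add_probOf {α : Type} [Fintype α] {P Q : α → ℝ}
    (hP : ∀ x, 0 ≤ P x) (hQ : ∀ x, 0 ≤ Q x) {A B : Set α} (hAB : ∀ x, x ∈ A ∨ x ∈ B) :
    ∑ x, min (P x) (Q x) ≤ probOf P A + probOf Q B := by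
  rw [probOf, probOf, ← Finset.sum_add_distrib]
  refine Finset.sum_le_sum fun x _ => ?_
  rcases hAB x with hx | hx
  · rw [Set.indicator_of_mem hx]
    exact (min_le_left _ _).trans
      (le_add_of_nonneg_right (Set.indicator_nonneg (fun y _ => hQ y) x))
  · rw [Set.indicator_of_mem hx]
    exact (min_le_right _ _).trans
      (le_add_of_nonneg_left (Set.indicator_nonneg (fun y _ => hP y) x))

section Moments
variable {W : Type*} [Fintype W] (r L : W → ℝ)

theorem sum_pi_fin_succ {β : Type*} [AddCommMonoid β] {n : ℕ} (f : (Fin (n + 1) → W) → β) :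
    ∑ y, f y = ∑ a, ∑ z : Fin n → W, f (Fin.cons a z) := by
  rw [← (Fin.consEquiv fun _ => W).sum_comp, Fintype.sum_prod_type]
  rfl

theorem sum_pi_prod_mul_sum_eq_zero (h : ∑ w, r w * L w = 0) (n : ℕ) :
    ∑ y : Fin n → W, (∏ k, r (y k)) * ∑ k, L (y k) = 0 := by
  induction n with
  | zero => simp
  | succ n ih =>
    simp only [sum_pi_fin_succ, Fin.prod_univ_succ, Fin.sum_univ_succ, Fin.cons_zero,
      Fin.cons_succ]
    calc _ = ∑ a, ∑ z : Fin n → W,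
            (r a * L a * ∏ k, r (z k) + r a * ((∏ k, r (z k)) * ∑ k, L (z k))) :=
          Finset.sum_congr rfl fun a _ => Finset.sum_congr rfl fun z _ => by ring
      _ = 0 := by simp [Finset.sum_add_distrib, ← Finset.mul_sum, ih, ← Finset.sum_mul, h]

theorem sum_pi_prod_mul_sum_sq_mul (h : ∑ w, r w * L w = 0) (n : ℕ) :
    (∑ y : Fin n → W, (∏ k, r (y k)) * (∑ k, L (y k)) ^ 2) * ∑ w, r w
      = n * (∑ w, r w * L w ^ 2) * (∑ w, r w) ^ n := by
  induction n with
  | zero => simp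
  | succ n ih =>
    simp only [sum_pi_fin_succ, Fin.prod_univ_succ, Fin.sum_univ_succ, Fin.cons_zero,
      Fin.cons_succ]
    have hsplit : ∑ a, ∑ z : Fin n → W, r a * (∏ k, r (z k)) * (L a + ∑ k, L (z k)) ^ 2
        = (∑ w, r w * L w ^ 2) * (∑ w, r w) ^ n
          + 2 * (∑ w, r w * L w) * ∑ z : Fin n → W, (∏ k, r (z k)) * ∑ k, L (z k)
          + (∑ w, r w) * ∑ z : Fin n → W, (∏ k, r (z k)) * (∑ k, L (z k)) ^ 2 := by
      calc _ = ∑ a, ∑ z : Fin n → W, (r a * L a ^ 2 * ∏ k, r (z k)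
              + 2 * (r a * L a) * ((∏ k, r (z k)) * ∑ k, L (z k))
              + r a * ((∏ k, r (z k)) * (∑ k, L (z k)) ^ 2)) :=
            Finset.sum_congr rfl fun a _ => Finset.sum_congr rfl fun z _ => by ring
        _ = _ := by
          simp only [Finset.sum_add_distrib, ← Finset.mul_sum, ← Finset.sum_mul, Fintype.sum_pow]
    rw [hsplit, sum_pi_prod_mul_sum_eq_zero r L h, h]
    push_cast
    linear_combination (∑ w, r w) * ih

end Moments

theorem pow_mul_exp_neg_sqrt_le_sum_min_pi {W : Type*} [Fintype W] (g L : W → ℝ)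
    (hg : ∀ w, 0 ≤ g w) (hZ : 0 < ∑ w, g w) (hmean : ∑ w, g w * L w = 0) (n : ℕ) :
    (∑ w, g w) ^ n * Real.exp (-√(n * ((∑ w, g w * L w ^ 2) / ∑ w, g w)) / 2)
      ≤ ∑ y : Fin n → W, min ((∏ k, g (y k)) * Real.exp ((∑ k, L (y k)) / 2))
          ((∏ k, g (y k)) * Real.exp (-(∑ k, L (y k)) / 2)) := by
  have hmass : ∑ y : Fin n → W, ∏ k, g (y k) = (∑ w, g w) ^ n := (Fintype.sum_pow g n).symm
  have hvar : (∑ y : Fin n → W, (∏ k, g (y k)) * (∑ k, L (y k)) ^ 2)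
      / ∑ y : Fin n → W, ∏ k, g (y k) = n * ((∑ w, g w * L w ^ 2) / ∑ w, g w) := by
    rw [hmass, div_eq_iff (by positivity)]
    field_simp
    linear_combination sum_pi_prod_mul_sum_sq_mul g L hmean n
  rw [← hmass, ← hvar]
  exact sum_mul_exp_neg_sqrt_le_sum_min _ _ (fun y => Finset.prod_nonneg fun k _ => hg _)
    (hmass ▸ by positivity)

section OutlierModel
variable {𝓨 : Type} {M : ℕ} (μ π : 𝓨 → ℝ)

def pSample (i : Fin M) (w : Fin M → 𝓨) : ℝ :=
  ∏ l, (if l = i then μ else π) (w l)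

theorem pOne_eq_prod_pSample [Fintype 𝓨] {n : ℕ} (i : Fin M) (y : Fin n → Fin M → 𝓨) :
    pOne μ π i y = ∏ k, pSample μ π i (y k) := rfl

variable {μ π}

theorem pSample_pos (hμ : FullSupport μ) (hπ : FullSupport π) (i : Fin M) (w : Fin M → 𝓨) :
    0 < pSample μ π i w :=
  Finset.prod_pos fun l _ => by split_ifs; exacts [hμ _, hπ _]

theorem pSample_comp_swap (i j k : Fin M) (w : Fin M → 𝓨) :
    pSample μ π k (w ∘ Equiv.swap i j) = pSample μ π (Equiv.swap i j k) w := by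
  rw [pSample, ← Equiv.prod_comp (Equiv.swap i j)]
  simp [pSample, Equiv.swap_apply_eq_iff]

theorem sum_sqrt_pSample_mul_pSample [Fintype 𝓨] (hμ : FullSupport μ) (hπ : IsProb π)
    {i j : Fin M} (hij : i ≠ j) :
    ∑ w, √(pSample μ π i w * pSample μ π j w) = (∑ y, √(μ y) * √(π y)) ^ 2 := by
  classical
  set h : Fin M → 𝓨 → ℝ :=
    fun l a => √((if l = i then μ else π) a * (if l = j then μ else π) a)
  have hfactor : ∀ l, ∑ a, h l a
      = if l ∈ ({i, j} : Finset (Fin M)) then ∑ y, √(μ y) * √(π y) else 1 := by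
    intro l
    by_cases hli : l = i
    · subst hli
      simp [h, hij, fun a => Real.sqrt_mul' (μ a) (hπ.1 a)]
    by_cases hlj : l = j
    · subst hlj
      simp [h, hli, fun a => Real.sqrt_mul' (μ a) (hπ.1 a), mul_comm]
    · simp [h, hli, hlj, fun a => Real.sqrt_mul_self (hπ.1 a), hπ.2]
  have hsqrt : ∀ w, √(pSample μ π i w * pSample μ π j w) = ∏ l, h l (w l) := fun w => by
    rw [pSample, pSample, ← Finset.prod_mul_distrib, Real.sqrt_prod]
    have hnonneg : ∀ (k l : Fin M) (a : 𝓨), 0 ≤ (if l = k then μ else π) a := fun k l a => by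
      split_ifs; exacts [(hμ a).le, hπ.1 a]
    exact fun l _ => mul_nonneg (hnonneg i l _) (hnonneg j l _)
  simp only [hsqrt, ← Fintype.prod_sum, hfactor, Finset.prod_ite_mem, Finset.univ_inter,
    Finset.prod_const, Finset.card_pair hij]

theorem sum_sqrt_pSample_mul_log_sub_eq_zero [Fintype 𝓨] (i j : Fin M) :
    ∑ w, √(pSample μ π i w * pSample μ π j w)
      * (Real.log (pSample μ π i w) - Real.log (pSample μ π j w)) = 0 := by
  refine sum_sqrt_mul_mul_log_sub_eq_zero _ _ ((Equiv.swap i j).arrowCongr (Equiv.refl 𝓨))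
    (fun w => ?_) (fun w => ?_)
  · show pSample μ π i (w ∘ Equiv.swap i j) = _
    rw [pSample_comp_swap, Equiv.swap_apply_left]
  · show pSample μ π j (w ∘ Equiv.swap i j) = _
    rw [pSample_comp_swap, Equiv.swap_apply_right]

theorem sum_pOne [Fintype 𝓨] (hμ : IsProb μ) (hπ : IsProb π) (n : ℕ) (i : Fin M) :
    ∑ y : Fin n → Fin M → 𝓨, pOne μ π i y = 1 := by
  classical
  have hsample : ∑ w, pSample μ π i w = 1 := by
    simp only [pSample]
    rw [← Fintype.prod_sum fun l a => (if l = i then μ else π) a]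
    exact Finset.prod_eq_one fun l _ => by split_ifs; exacts [hμ.2, hπ.2]
  simp only [pOne_eq_prod_pSample, ← Fintype.sum_pow, hsample, one_pow]

theorem pOne_nonneg [Fintype 𝓨] (hμ : ∀ y, 0 ≤ μ y) (hπ : ∀ y, 0 ≤ π y) {n : ℕ}
    (i : Fin M) (y : Fin n → Fin M → 𝓨) : 0 ≤ pOne μ π i y :=
  Finset.prod_nonneg fun _ _ => Finset.prod_nonneg fun l _ => by
    split_ifs; exacts [hμ _, hπ _]

theorem probOf_le_errOne [Fintype 𝓨] {n : ℕ} (δ : (Fin n → Fin M → 𝓨) → Fin M) (i : Fin M) :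
    probOf (pOne μ π i) {y | δ y ≠ i} ≤ errOne μ π δ :=
  le_ciSup (f := fun i => probOf (pOne μ π i) {y | δ y ≠ i}) (Set.finite_range _).bddAbove i

theorem errOne_le_one [Fintype 𝓨] [NeZero M] (hμ : IsProb μ) (hπ : IsProb π) {n : ℕ}
    (δ : (Fin n → Fin M → 𝓨) → Fin M) : errOne μ π δ ≤ 1 :=
  ciSup_le fun i => (probOf_le_sum (pOne_nonneg hμ.1 hπ.1 i) _).trans_eq (sum_pOne hμ hπ n i)

theorem sum_min_pOne_le_two_mul_errOne [Fintype 𝓨] (hμ : ∀ y, 0 ≤ μ y) (hπ : ∀ y, 0 ≤ π y)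
    {n : ℕ} (δ : (Fin n → Fin M → 𝓨) → Fin M) {i j : Fin M} (hij : i ≠ j) :
    ∑ y : Fin n → Fin M → 𝓨, min (pOne μ π i y) (pOne μ π j y) ≤ 2 * errOne μ π δ := by
  have hcover : ∀ y, y ∈ {y | δ y ≠ i} ∨ y ∈ {y | δ y ≠ j} := fun y => by
    by_cases hy : δ y = i
    · exact Or.inr (by simp [hy, hij])
    · exact Or.inl hy
  linarith [sum_min_le_probOf_add_probOf (pOne_nonneg hμ hπ i) (pOne_nonneg hμ hπ j) hcover,
    probOf_le_errOne (μ := μ) (π := π) δ i, probOf_le_errOne (μ := μ) (π := π) δ j]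

theorem sum_sqrt_mul_sqrt_pos [Fintype 𝓨] [Nonempty 𝓨] (hμ : FullSupport μ)
    (hπ : FullSupport π) : 0 < ∑ y, √(μ y) * √(π y) :=
  Finset.sum_pos (fun y _ => mul_pos (Real.sqrt_pos.2 (hμ y)) (Real.sqrt_pos.2 (hπ y)))
    Finset.univ_nonempty

theorem exp_neg_two_mul_Bhat [Fintype 𝓨] [Nonempty 𝓨] (hμ : FullSupport μ)
    (hπ : FullSupport π) : Real.exp (-(2 * Bhat μ π)) = (∑ y, √(μ y) * √(π y)) ^ 2 := by
  rw [Bhat, mul_neg, neg_neg, two_mul, Real.exp_add, Real.exp_log (sum_sqrt_mul_sqrt_pos hμ hπ),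
    sq]

theorem exists_exp_le_two_mul_errOne [Fintype 𝓨] [Nonempty 𝓨] (hM : 2 ≤ M)
    (hπ : IsProb π) (hμf : FullSupport μ) (hπf : FullSupport π) :
    ∃ c : ℝ, ∀ (n : ℕ) (δ : (Fin n → Fin M → 𝓨) → Fin M),
      Real.exp (-(n * (2 * Bhat μ π) + c * √n)) ≤ 2 * errOne μ π δ := by
  let i : Fin M := ⟨0, by omega⟩
  let j : Fin M := ⟨1, by omega⟩
  have hij : i ≠ j := by simp [i, j, Fin.ext_iff]
  set g : (Fin M → 𝓨) → ℝ := fun w => √(pSample μ π i w * pSample μ π j w)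
  set L : (Fin M → 𝓨) → ℝ := fun w => Real.log (pSample μ π i w) - Real.log (pSample μ π j w)
  have hg : ∑ w, g w = (∑ y, √(μ y) * √(π y)) ^ 2 := sum_sqrt_pSample_mul_pSample hμf hπ hij
  have hsample : ∀ w, pSample μ π i w = g w * Real.exp (L w / 2) ∧
      pSample μ π j w = g w * Real.exp (-L w / 2) := fun w => by
    have hPi := pSample_pos hμf hπf i w
    have hPj := pSample_pos hμf hπf j w
    refine ⟨(sqrt_mul_mul_exp_log_sub_div_two hPi hPj).symm, ?_⟩
    rw [← sqrt_mul_mul_exp_log_sub_div_two hPj hPi, mul_comm (pSample μ π j w), neg_sub]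
  refine ⟨√((∑ w, g w * L w ^ 2) / ∑ w, g w) / 2, fun n δ => ?_⟩
  have hpOne : ∀ y : Fin n → Fin M → 𝓨,
      pOne μ π i y = (∏ k, g (y k)) * Real.exp ((∑ k, L (y k)) / 2) ∧
      pOne μ π j y = (∏ k, g (y k)) * Real.exp (-(∑ k, L (y k)) / 2) := fun y => by
    simp only [pOne_eq_prod_pSample, fun w => (hsample w).1, fun w => (hsample w).2,
      Finset.prod_mul_distrib, ← Real.exp_sum, Finset.sum_div, ← Finset.sum_neg_distrib,
      neg_div, and_self]
  calc Real.exp (-(n * (2 * Bhat μ π) + √((∑ w, g w * L w ^ 2) / ∑ w, g w) / 2 * √n))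
      = (∑ w, g w) ^ n * Real.exp (-√(n * ((∑ w, g w * L w ^ 2) / ∑ w, g w)) / 2) := by
        rw [neg_add, Real.exp_add, ← mul_neg, Real.exp_nat_mul, exp_neg_two_mul_Bhat hμf hπf,
          ← hg, Real.sqrt_mul (Nat.cast_nonneg n)]
        ring_nf
    _ ≤ ∑ y : Fin n → Fin M → 𝓨, min (pOne μ π i y) (pOne μ π j y) := by
        simp only [fun y => (hpOne y).1, fun y => (hpOne y).2]
        exact pow_mul_exp_neg_sqrt_le_sum_min_pi g L (fun w => Real.sqrt_nonneg _)
          (hg ▸ pow_pos (sum_sqrt_mul_sqrt_pos hμf hπf) 2) (sum_sqrt_pSample_mul_log_sub_eq_zero i j) n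
    _ ≤ 2 * errOne μ π δ :=
        sum_min_pOne_le_two_mul_errOne (fun y => (hμf y).le) (fun y => (hπf y).le) δ hij

end OutlierModel

section Exponent
open Real

theorem limsup_neg_inv_mul_log_le {u : ℕ → ℝ} {b c : ℝ} (hu : ∀ n, u n ≤ 1)
    (h : ∀ n : ℕ, exp (-(n * b + c * √n)) ≤ 2 * u n) :
    limsup (fun n : ℕ => -(1 / (n : ℝ)) * log (u n)) atTop ≤ b := by
  have hpos : ∀ n, 0 < u n := fun n => by linarith [h n, exp_pos (-(n * b + c * √n))]
  have hbound : ∀ n : ℕ, 1 ≤ n → -(1 / (n : ℝ)) * log (u n) ≤ b + c / √n + log 2 / n := by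
    intro n hn
    have hn' : (0 : ℝ) < n := by exact_mod_cast hn
    have hlog : -(n * b + c * √n) ≤ log 2 + log (u n) := by
      rw [← log_mul two_ne_zero (hpos n).ne', ← log_exp (-(n * b + c * √n))]
      exact log_le_log (exp_pos _) (h n)
    calc -(1 / (n : ℝ)) * log (u n) = -log (u n) / n := by ring
      _ ≤ (n * b + c * √n + log 2) / n := div_le_div_of_nonneg_right (by linarith) hn'.le
      _ = b + c / √n + log 2 / n := by
        have hs : (√n : ℝ) ≠ 0 := (sqrt_pos.2 hn').ne'
        field_simp
        linear_combination c * mul_self_sqrt hn'.le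
  have hlim : Tendsto (fun n : ℕ => b + c / √n + log 2 / n) atTop (𝓝 b) := by
    have h₁ := tendsto_const_nhds (x := c).div_atTop
      (tendsto_sqrt_atTop.comp tendsto_natCast_atTop_atTop)
    simpa using (tendsto_const_nhds.add h₁).add (tendsto_const_div_atTop_nhds_zero_nat (log 2))
  have hcobdd : IsCoboundedUnder (· ≤ ·) atTop fun n : ℕ => -(1 / (n : ℝ)) * log (u n) :=
    isCoboundedUnder_le_of_le atTop fun n =>
      mul_nonneg_of_nonpos_of_nonpos (by simp) (log_nonpos (hpos n).le (hu n))
  rw [← hlim.limsup_eq]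
  exact limsup_le_limsup (eventually_atTop.2 ⟨1, hbound⟩) hcobdd hlim.isBoundedUnder_le

end Exponent

theorem statement3_general (𝓨 : Type) [Fintype 𝓨] [Nonempty 𝓨]
    (M : ℕ) (hM : 3 ≤ M)
    (μ π : 𝓨 → ℝ) (hμ : IsProb μ) (hπ : IsProb π)
    (hμf : FullSupport μ) (hπf : FullSupport π)
    (δ : (n : ℕ) → (Fin n → Fin M → 𝓨) → Fin M) :
    Filter.limsup (fun n : ℕ => -(1 / (n : ℝ)) * Real.log (errOne μ π (δ n)))
      atTop ≤ 2 * Bhat μ π := by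
  have : NeZero M := ⟨by omega⟩
  obtain ⟨c, hc⟩ := exists_exp_le_two_mul_errOne (by omega : 2 ≤ M) hπ hμf hπf
  exact limsup_neg_inv_mul_log_le (fun n => errOne_le_one hμ hπ (δ n)) fun n => hc n (δ n)

/-- converse part of Theorem 1.  For every sequence of tests
in the one-outlier model, the exponent of the maximal error probability
satisfies `limsup_n -(1/n) log e_n(δ_n) ≤ 2·B(μ,π)`. -/
theorem statement3 (𝓨 : Type) [Fintype 𝓨] [Nonempty 𝓨]
    (M : ℕ) (hM : 3 ≤ M)
    (μ π : 𝓨 → ℝ) (hμ : IsProb μ) (hπ : IsProb π)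
    (hμf : FullSupport μ) (hπf : FullSupport π) (hne : μ ≠ π)
    (δ : (n : ℕ) → (Fin n → Fin M → 𝓨) → Fin M) :
    Filter.limsup (fun n : ℕ => -(1 / (n : ℝ)) * Real.log (errOne μ π (δ n)))
      atTop ≤ 2 * Bhat μ π :=
  statement3_general 𝓨 M hM μ π hμ hπ hμf hπf δ
end
end

section
/- For any two full-support probability distributions μ ≠ π on 𝒴, the value of the optimization problem min_{(q_1,q_2)} ( D(q_1‖μ) + D(q_2‖π) ), where the minimum is over pairs of probability distributions q_1, q_2 on 𝒴 satisfying D(q_1‖μ) + D(q_2‖π) ≥ D(q_1‖π) + D(q_2‖μ), is equal to 2·B(μ, π). -/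
/-!
With the geometric mixture `r ∝ √(μ π)` one has the identity
`D(q‖μ) + D(q‖π) = 2 D(q‖r) + 2 B(μ, π)`, so by Gibbs' inequality `D(q‖μ) + D(q‖π) ≥ 2 B(μ, π)`
for every `q`, with equality at `q = r`. The constraint says that the objective is at least the
average of `D(q₁‖μ) + D(q₁‖π)` and `D(q₂‖μ) + D(q₂‖π)`, hence at least `2 B(μ, π)`, and
`q₁ = q₂ = r` attains this value.
-/

open Filter Finset Topology

noncomputable section

open InformationTheory

variable {𝓨 : Type} [Fintype 𝓨]

lemma KL_nonneg_s5 {q r : 𝓨 → ℝ} (hq : IsProb q) (hr : IsProb r) (hrf : FullSupport r) :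
    0 ≤ KL q r := by
  have hterm : ∀ y, q y * Real.log (q y / r y) = r y * klFun (q y / r y) + (q y - r y) := by
    intro y
    have hry := (hrf y).ne'
    rw [klFun]
    field_simp
    ring
  have hsum : KL q r = ∑ y, r y * klFun (q y / r y) := by
    simp only [KL, hterm, sum_add_distrib, sum_sub_distrib, hq.2, hr.2, sub_self, add_zero]
  rw [hsum]
  exact sum_nonneg fun y _ ↦
    mul_nonneg (hrf y).le (klFun_nonneg (div_nonneg (hq.1 y) (hrf y).le))

lemma KL_self_s5 (r : 𝓨 → ℝ) (hrf : FullSupport r) : KL r r = 0 :=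
  sum_eq_zero fun y _ ↦ by rw [div_self (hrf y).ne', Real.log_one, mul_zero]

def geomMix (μ π : 𝓨 → ℝ) (y : 𝓨) : ℝ :=
  √(μ y) * √(π y) / ∑ y', √(μ y') * √(π y')

section GeomMix

variable [Nonempty 𝓨] {μ π : 𝓨 → ℝ} (hμf : FullSupport μ) (hπf : FullSupport π)
include hμf hπf

lemma bhatCoeff_pos_s5 : 0 < ∑ y, √(μ y) * √(π y) :=
  sum_pos (fun y _ ↦ mul_pos (Real.sqrt_pos.2 (hμf y)) (Real.sqrt_pos.2 (hπf y))) univ_nonempty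

lemma fullSupport_geomMix : FullSupport (geomMix μ π) := fun y ↦
  div_pos (mul_pos (Real.sqrt_pos.2 (hμf y)) (Real.sqrt_pos.2 (hπf y))) (bhatCoeff_pos_s5 hμf hπf)

lemma isProb_geomMix : IsProb (geomMix μ π) := by
  refine ⟨fun y ↦ (fullSupport_geomMix hμf hπf y).le, ?_⟩
  simp only [geomMix, ← sum_div]
  exact div_self (bhatCoeff_pos_s5 hμf hπf).ne'

lemma log_div_add_log_div_eq (y : 𝓨) {a : ℝ} (ha : 0 < a) :
    Real.log (a / μ y) + Real.log (a / π y) = 2 * Real.log (a / geomMix μ π y) + 2 * Bhat μ π := by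
  have hsμ := Real.sqrt_pos.2 (hμf y)
  have hsπ := Real.sqrt_pos.2 (hπf y)
  have hZ := bhatCoeff_pos_s5 hμf hπf
  rw [Real.log_div ha.ne' (hμf y).ne', Real.log_div ha.ne' (hπf y).ne',
    Real.log_div ha.ne' (fullSupport_geomMix hμf hπf y).ne', geomMix,
    Real.log_div (mul_pos hsμ hsπ).ne' hZ.ne', Real.log_mul hsμ.ne' hsπ.ne',
    Real.log_sqrt (hμf y).le, Real.log_sqrt (hπf y).le, Bhat]
  ring

lemma KL_add_KL_eq_s5 {q : 𝓨 → ℝ} (hq : IsProb q) :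
    KL q μ + KL q π = 2 * KL q (geomMix μ π) + 2 * Bhat μ π := by
  have hterm : ∀ y, q y * Real.log (q y / μ y) + q y * Real.log (q y / π y) =
      2 * (q y * Real.log (q y / geomMix μ π y)) + 2 * Bhat μ π * q y := by
    intro y
    rcases (hq.1 y).eq_or_lt with hq0 | hqpos
    · simp [← hq0]
    · rw [← mul_add, log_div_add_log_div_eq hμf hπf y hqpos]
      ring
  rw [KL, KL, KL, ← sum_add_distrib, sum_congr rfl fun y _ ↦ hterm y, sum_add_distrib,
    ← mul_sum, ← mul_sum, hq.2, mul_one]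

lemma two_mul_Bhat_le_KL_add_KL {q : 𝓨 → ℝ} (hq : IsProb q) :
    2 * Bhat μ π ≤ KL q μ + KL q π := by
  have := KL_nonneg_s5 hq (isProb_geomMix hμf hπf) (fullSupport_geomMix hμf hπf)
  rw [KL_add_KL_eq_s5 hμf hπf hq]
  linarith

lemma KL_geomMix_add_KL_geomMix :
    KL (geomMix μ π) μ + KL (geomMix μ π) π = 2 * Bhat μ π := by
  rw [KL_add_KL_eq_s5 hμf hπf (isProb_geomMix hμf hπf),
    KL_self_s5 _ (fullSupport_geomMix hμf hπf), mul_zero, zero_add]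

end GeomMix

theorem statement5_general (𝓨 : Type) [Fintype 𝓨] [Nonempty 𝓨]
    (μ π : 𝓨 → ℝ)
    (hμf : FullSupport μ) (hπf : FullSupport π) :
    IsLeast {x : ℝ | ∃ q₁ q₂ : 𝓨 → ℝ, IsProb q₁ ∧ IsProb q₂ ∧
        KL q₁ μ + KL q₂ π ≥ KL q₁ π + KL q₂ μ ∧
        x = KL q₁ μ + KL q₂ π}
      (2 * Bhat μ π) := by
  have hr := isProb_geomMix hμf hπf
  refine ⟨⟨geomMix μ π, geomMix μ π, hr, hr, ge_of_eq (add_comm _ _),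
    (KL_geomMix_add_KL_geomMix hμf hπf).symm⟩, ?_⟩
  rintro x ⟨q₁, q₂, hq₁, hq₂, hconstraint, rfl⟩
  have h₁ := two_mul_Bhat_le_KL_add_KL hμf hπf hq₁
  have h₂ := two_mul_Bhat_le_KL_add_KL hμf hπf hq₂
  linarith

/-- `min { D(q₁‖μ)+D(q₂‖π) : D(q₁‖μ)+D(q₂‖π) ≥ D(q₁‖π)+D(q₂‖μ) }
= 2·B(μ,π)`. -/
theorem statement5 (𝓨 : Type) [Fintype 𝓨] [Nonempty 𝓨]
    (μ π : 𝓨 → ℝ) (hμ : IsProb μ) (hπ : IsProb π)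
    (hμf : FullSupport μ) (hπf : FullSupport π) (hne : μ ≠ π) :
    IsLeast {x : ℝ | ∃ q₁ q₂ : 𝓨 → ℝ, IsProb q₁ ∧ IsProb q₂ ∧
        KL q₁ μ + KL q₂ π ≥ KL q₁ π + KL q₂ μ ∧
        x = KL q₁ μ + KL q₂ π}
      (2 * Bhat μ π) :=
  statement5_general 𝓨 μ π hμf hπf
end
end

section
/- (Lower bound in Theorem 3.) Fix M ≥ 3 and full-support probability distributions μ ≠ π on 𝒴. Then V*(M) ≥ LB(M), where V*(M) is the minimum of D(q_1‖μ) + D(q_2‖π) + … + D(q_M‖π) over all M-tuples of probability distributions (q_1,…,q_M) on 𝒴 satisfying Σ_{j≠1} D( q_j ‖ (Σ_{k≠1} q_k)/(M−1) ) ≥ Σ_{j≠2} D( q_j ‖ (Σ_{k≠2} q_k)/(M−1) ), and LB(M) is the minimum of 2·B(μ, q) over all probability distributions q on 𝒴 satisfying D(q‖π) ≤ (1/(M−1))·( 2·B(μ,π) + C_π ), with C_π ≜ −log( min_{y∈𝒴} π(y) ). -/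
open Filter Finset Topology

noncomputable section

/-- The feasible values of the optimization problem in Theorem 2: tuples
`(q_1, …, q_M)` of distributions (indexed here by `0, …, M-1`) satisfying
`∑_{j≠1} D(q_j ‖ (∑_{k≠1} q_k)/(M-1)) ≥ ∑_{j≠2} D(q_j ‖ (∑_{k≠2} q_k)/(M-1))`,
with objective `D(q_1‖μ) + D(q_2‖π) + … + D(q_M‖π)`. -/
def VstarSet {𝓨 : Type} [Fintype 𝓨] (μ π : 𝓨 → ℝ) (M : ℕ) : Set ℝ :=
  {x | ∃ q : ℕ → 𝓨 → ℝ, (∀ j < M, IsProb (q j)) ∧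
    (∑ j ∈ Finset.range M \ {0}, KL (q j)
        (fun a => (∑ k ∈ Finset.range M \ {0}, q k a) / ((M : ℝ) - 1)) ≥
     ∑ j ∈ Finset.range M \ {1}, KL (q j)
        (fun a => (∑ k ∈ Finset.range M \ {1}, q k a) / ((M : ℝ) - 1))) ∧
    x = KL (q 0) μ + ∑ j ∈ Finset.range M \ {0}, KL (q j) π}

/-- Feasible values of the lower-bound optimization in Theorem 3:
`2·B(μ,q)` over distributions `q` with
`D(q‖π) ≤ (2B(μ,π) + C_π)/(M-1)`, where `C_π = -log min_y π(y)`. -/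
def LBSet {𝓨 : Type} [Fintype 𝓨] (μ π : 𝓨 → ℝ) (M : ℕ) : Set ℝ :=
  {x | ∃ q : 𝓨 → ℝ, IsProb q ∧
    KL q π ≤ (1 / ((M : ℝ) - 1)) * (2 * Bhat μ π + (- Real.log (⨅ y, π y))) ∧
    x = 2 * Bhat μ q}

/-! A feasible tuple `(q_1, …, q_M)` of value `v` yields the candidate
`r = (∑_{k≠2} q_k)/(M-1)` for `LB(M)`. Write `JS_i = ∑_{j≠i} D(q_j ‖ avg_{k≠i} q_k)`. The
compensation identity `∑_{j∈J} D(q_j‖p) = JS + (M-1)·D(avg_J‖p)` and the constraint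
`JS_1 ≥ JS_2` give `v ≥ D(q_1‖μ) + D(q_1‖r) ≥ 2B(μ,r)`, the last step by Gibbs' inequality
against the tilted distribution `∝ √(μ r)`. The same identity bounds `(M-1)·D(r‖π)` by
`D(q_1‖π) + v ≤ C_π + v`, so `r` is feasible for `LB(M)` unless `v ≥ 2B(μ,π)`, and then `π`
itself is. Both minima exist by compactness. -/

section KullbackLeibler

open Real

variable {𝓨 : Type} [Fintype 𝓨]

lemma IsProb.le_one {q : 𝓨 → ℝ} (hq : IsProb q) (y : 𝓨) : q y ≤ 1 :=
  hq.2 ▸ single_le_sum (fun z _ => hq.1 z) (mem_univ y)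

lemma mul_log_div_eq_add {a m p : ℝ} (hm : a ≠ 0 → m ≠ 0) (hp : p ≠ 0) :
    a * log (a / p) = a * log (a / m) + a * log (m / p) := by
  rcases eq_or_ne a 0 with rfl | ha
  · simp
  · rw [log_div ha hp, log_div ha (hm ha), log_div (hm ha) hp]
    ring

theorem kl_nonneg {q b : 𝓨 → ℝ} (hq : IsProb q) (hb : ∀ y, 0 ≤ b y) (hb1 : ∑ y, b y ≤ 1)
    (hsupp : ∀ y, q y ≠ 0 → b y ≠ 0) : 0 ≤ KL q b := by
  have key : ∀ y, q y - b y ≤ q y * log (q y / b y) := by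
    intro y
    rcases (hq.1 y).eq_or_lt with h | h
    · simpa [← h] using hb y
    · have hby : 0 < b y := (hb y).lt_of_ne' (hsupp y h.ne')
      have hlog := one_sub_inv_le_log_of_pos (div_pos h hby)
      rw [inv_div] at hlog
      calc q y - b y = q y * (1 - b y / q y) := by field_simp
        _ ≤ q y * log (q y / b y) := mul_le_mul_of_nonneg_left hlog h.le
  calc 0 ≤ ∑ y, (q y - b y) := by rw [sum_sub_distrib, hq.2]; linarith
    _ ≤ KL q b := sum_le_sum fun y _ => key y

theorem kl_self {p : 𝓨 → ℝ} (hp : FullSupport p) : KL p p = 0 :=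
  sum_eq_zero fun y _ => by rw [div_self (hp y).ne', log_one, mul_zero]

theorem continuous_kl_left {p : 𝓨 → ℝ} (hp : FullSupport p) :
    Continuous fun q : 𝓨 → ℝ => KL q p := by
  have h : ∀ q : 𝓨 → ℝ, KL q p = ∑ y, p y * (q y / p y * log (q y / p y)) := fun q =>
    sum_congr rfl fun y _ => by rw [← mul_assoc, mul_div_cancel₀ _ (hp y).ne']
  simp_rw [h]
  exact continuous_finsetSum _ fun y _ =>
    continuous_const.mul (continuous_mul_log.comp ((continuous_apply y).div_const _))

lemma neg_log_iInf_nonneg [Nonempty 𝓨] {p : 𝓨 → ℝ} (hp : IsProb p) (hpf : FullSupport p) :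
    0 ≤ -log (⨅ y, p y) := by
  obtain ⟨y₀, hy₀⟩ := exists_eq_ciInf_of_finite (f := p)
  exact neg_nonneg.2 (hy₀ ▸ log_nonpos (hpf y₀).le (hp.le_one y₀))

theorem kl_le_neg_log_iInf [Nonempty 𝓨] {q p : 𝓨 → ℝ} (hq : IsProb q) (hpf : FullSupport p) :
    KL q p ≤ -log (⨅ y, p y) := by
  obtain ⟨y₀, hy₀⟩ := exists_eq_ciInf_of_finite (f := p)
  have per : ∀ y, q y * log (q y / p y) ≤ q y * -log (⨅ y, p y) := by
    intro y
    rcases (hq.1 y).eq_or_lt with h | h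
    · simp [← h]
    refine mul_le_mul_of_nonneg_left ?_ h.le
    rw [log_div h.ne' (hpf y).ne', ← hy₀]
    have := log_nonpos h.le (hq.le_one y)
    have := log_le_log (hpf y₀) (hy₀ ▸ ciInf_le (Finite.bddBelow_range p) y)
    linarith
  calc KL q p ≤ ∑ y, q y * -log (⨅ y, p y) := sum_le_sum fun y _ => per y
    _ = -log (⨅ y, p y) := by rw [← sum_mul, hq.2, one_mul]

end KullbackLeibler

section Bhattacharyya

open Real

variable {𝓨 : Type} [Fintype 𝓨]

lemma sum_sqrt_mul_sqrt_pos_s10 {p q : 𝓨 → ℝ} (hp : FullSupport p) (hq : IsProb q) :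
    0 < ∑ y, √(p y) * √(q y) := by
  obtain ⟨y, -, hy⟩ := exists_lt_of_sum_lt (s := univ) (f := 0) (g := q) (by simp [hq.2])
  exact sum_pos' (fun _ _ => by positivity)
    ⟨y, mem_univ y, mul_pos (sqrt_pos.2 (hp y)) (sqrt_pos.2 hy)⟩

theorem bhat_nonneg {p q : 𝓨 → ℝ} (hp : IsProb p) (hq : IsProb q) : 0 ≤ Bhat p q := by
  have h := sum_sqrt_mul_sqrt_le univ hp.1 hq.1
  rw [hp.2, hq.2, sqrt_one, one_mul] at h
  exact neg_nonneg.2 (log_nonpos (sum_nonneg fun _ _ => by positivity) h)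

theorem continuousOn_bhat {p : 𝓨 → ℝ} (hp : FullSupport p) :
    ContinuousOn (Bhat p) (stdSimplex ℝ 𝓨) := by
  refine (ContinuousOn.log ?_ fun q hq => (sum_sqrt_mul_sqrt_pos_s10 hp hq).ne').neg
  exact (continuous_finsetSum _ fun y _ =>
    continuous_const.mul (continuous_sqrt.comp (continuous_apply y))).continuousOn

/-- Gibbs' inequality against the tilted distribution `b ∝ √(μ r)`, for which
`2 D(q‖b) = D(q‖μ) + D(q‖r) - 2 B(μ,r)`. -/
theorem two_mul_bhat_le_kl_add_kl {μ q r : 𝓨 → ℝ} (hμ : FullSupport μ) (hq : IsProb q)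
    (hr : IsProb r) (hsupp : ∀ y, q y ≠ 0 → r y ≠ 0) : 2 * Bhat μ r ≤ KL q μ + KL q r := by
  set Z := ∑ y, √(μ y) * √(r y)
  have hZ : 0 < Z := sum_sqrt_mul_sqrt_pos_s10 hμ hr
  set b : 𝓨 → ℝ := fun y => √(μ y) * √(r y) / Z
  have hb_pos : ∀ y, q y ≠ 0 → 0 < b y := fun y hy =>
    div_pos (mul_pos (sqrt_pos.2 (hμ y)) (sqrt_pos.2 ((hr.1 y).lt_of_ne' (hsupp y hy)))) hZ
  have hgibbs : 0 ≤ KL q b := by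
    refine kl_nonneg hq (fun y => by positivity) (by rw [← sum_div]; exact (div_self hZ.ne').le)
      fun y hy => (hb_pos y hy).ne'
  have per : ∀ y, 2 * (q y * log (q y / b y))
      = q y * log (q y / μ y) + q y * log (q y / r y) + 2 * (q y * log Z) := by
    intro y
    rcases eq_or_ne (q y) 0 with h | h
    · simp [h]
    have hry : 0 < r y := (hr.1 y).lt_of_ne' (hsupp y h)
    rw [log_div h (hb_pos y h).ne', log_div h (hμ y).ne', log_div h hry.ne',
      log_div (mul_pos (sqrt_pos.2 (hμ y)) (sqrt_pos.2 hry)).ne' hZ.ne',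
      log_mul (sqrt_pos.2 (hμ y)).ne' (sqrt_pos.2 hry).ne', log_sqrt (hμ y).le, log_sqrt hry.le]
    ring
  have h2 : 2 * KL q b = KL q μ + KL q r - 2 * Bhat μ r := by
    have hZsum : ∑ y, 2 * (q y * log Z) = 2 * log Z := by
      rw [← mul_sum, ← sum_mul, hq.2, one_mul]
    rw [KL, mul_sum, sum_congr rfl fun y _ => per y, sum_add_distrib, sum_add_distrib, hZsum]
    simp only [KL, Bhat, Z]
    ring
  linarith

end Bhattacharyya

section Mixture

open Real

variable {𝓨 : Type} {ι : Type*} {J : Finset ι} {c : ℝ} {q : ι → 𝓨 → ℝ}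

def mix (J : Finset ι) (c : ℝ) (q : ι → 𝓨 → ℝ) : 𝓨 → ℝ := fun y => (∑ k ∈ J, q k y) / c

lemma mix_ne_zero (hq : ∀ k ∈ J, ∀ y, 0 ≤ q k y) (hc : 0 < c) {j : ι} (hj : j ∈ J) :
    ∀ y, q j y ≠ 0 → mix J c q y ≠ 0 := fun y hy =>
  (div_pos (((hq j hj y).lt_of_ne' hy).trans_le (single_le_sum (fun k hk => hq k hk y) hj))
    hc).ne'

variable [Fintype 𝓨]

def jensenShannon (J : Finset ι) (c : ℝ) (q : ι → 𝓨 → ℝ) : ℝ :=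
  ∑ j ∈ J, KL (q j) (mix J c q)

lemma isProb_mix (hq : ∀ j ∈ J, IsProb (q j)) (hJ : (#J : ℝ) = c) (hc : 0 < c) :
    IsProb (mix J c q) := by
  refine ⟨fun y => div_nonneg (sum_nonneg fun k hk => (hq k hk).1 y) hc.le, ?_⟩
  simp only [mix]
  rw [← sum_div, sum_comm, sum_congr rfl fun k hk => (hq k hk).2, sum_const, nsmul_one, hJ,
    div_self hc.ne']

lemma kl_mix_nonneg (hq : ∀ j ∈ J, IsProb (q j)) (hJ : (#J : ℝ) = c) (hc : 0 < c) {j : ι}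
    (hj : j ∈ J) : 0 ≤ KL (q j) (mix J c q) :=
  kl_nonneg (hq j hj) (isProb_mix hq hJ hc).1 (isProb_mix hq hJ hc).2.le
    (mix_ne_zero (fun k hk => (hq k hk).1) hc hj)

lemma kl_le_jensenShannon (hq : ∀ j ∈ J, IsProb (q j)) (hJ : (#J : ℝ) = c) (hc : 0 < c)
    {j : ι} (hj : j ∈ J) : KL (q j) (mix J c q) ≤ jensenShannon J c q :=
  single_le_sum (fun _ hi => kl_mix_nonneg hq hJ hc hi) hj

lemma jensenShannon_nonneg (hq : ∀ j ∈ J, IsProb (q j)) (hJ : (#J : ℝ) = c) (hc : 0 < c) :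
    0 ≤ jensenShannon J c q :=
  sum_nonneg fun _ hj => kl_mix_nonneg hq hJ hc hj

lemma jensenShannon_const {p : 𝓨 → ℝ} (hp : FullSupport p) (hJ : (#J : ℝ) = c) (hc : c ≠ 0) :
    jensenShannon J c (fun _ => p) = 0 := by
  have hmix : mix J c (fun _ => p) = p := funext fun y => by
    rw [mix, sum_const, nsmul_eq_mul, hJ, mul_div_cancel_left₀ _ hc]
  simp [jensenShannon, hmix, kl_self hp]

lemma jensenShannon_congr {q' : ι → 𝓨 → ℝ} (h : ∀ j ∈ J, q j = q' j) :
    jensenShannon J c q = jensenShannon J c q' := by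
  have hmix : mix J c q = mix J c q' := funext fun y => by
    simp only [mix, sum_congr rfl fun k hk => congrFun (h k hk) y]
  simp only [jensenShannon, hmix, sum_congr rfl fun j hj => congrArg (KL · (mix J c q')) (h j hj)]

theorem sum_kl_eq_jensenShannon_add {p : 𝓨 → ℝ} (hq : ∀ j ∈ J, ∀ y, 0 ≤ q j y) (hc : 0 < c)
    (hp : FullSupport p) :
    ∑ j ∈ J, KL (q j) p = jensenShannon J c q + c * KL (mix J c q) p := by
  have hsum : ∀ y, ∑ j ∈ J, q j y = c * mix J c q y := fun y =>
    (mul_div_cancel₀ _ hc.ne').symm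
  calc ∑ j ∈ J, KL (q j) p
      = ∑ j ∈ J, ∑ y, (q j y * log (q j y / mix J c q y) + q j y * log (mix J c q y / p y)) :=
        sum_congr rfl fun j hj => sum_congr rfl fun y _ =>
          mul_log_div_eq_add (mix_ne_zero hq hc hj y) (hp y).ne'
    _ = jensenShannon J c q + c * KL (mix J c q) p := by
        simp only [sum_add_distrib, jensenShannon, KL, mul_sum]
        congr 1
        rw [sum_comm]
        simp only [← sum_mul, hsum, mul_assoc]

/-- On nonnegative tuples the compensation identity with `p = 1` writes `jensenShannon` through
the continuous maps `D(·‖1)`. -/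
theorem continuousOn_jensenShannon (hc : 0 < c) :
    ContinuousOn (jensenShannon J c) {q : ι → 𝓨 → ℝ | ∀ j ∈ J, ∀ y, 0 ≤ q j y} := by
  have hone : FullSupport (fun _ : 𝓨 => (1 : ℝ)) := fun _ => one_pos
  have hmix : Continuous (mix J c : (ι → 𝓨 → ℝ) → 𝓨 → ℝ) := by
    unfold mix; fun_prop
  refine ContinuousOn.congr (f := fun q => ∑ j ∈ J, KL (q j) (fun _ => 1)
    - c * KL (mix J c q) (fun _ => 1)) ?_ fun q hq => ?_
  · exact ((continuous_finsetSum _ fun j _ => (continuous_kl_left hone).comp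
      (continuous_apply j)).sub (continuous_const.mul
      ((continuous_kl_left hone).comp hmix))).continuousOn
  · linarith [sum_kl_eq_jensenShannon_add hq hc hone]

end Mixture

section Optimization

variable {𝓨 : Type} [Fintype 𝓨] {M : ℕ} {μ π : 𝓨 → ℝ}

lemma cast_card_range_sdiff_singleton {i : ℕ} (hi : i < M) :
    (#(range M \ {i}) : ℝ) = (M : ℝ) - 1 := by
  rw [sdiff_singleton_eq_erase, card_erase_of_mem (mem_range.2 hi), card_range,
    Nat.cast_sub (by omega), Nat.cast_one]

lemma cast_sub_one_pos (hM : 2 ≤ M) : (0 : ℝ) < (M : ℝ) - 1 := by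
  have : (2 : ℝ) ≤ M := by exact_mod_cast hM
  linarith

theorem two_mul_bhat_mem_LBSet [Nonempty 𝓨] (hM : 2 ≤ M) (hμ : IsProb μ) (hπ : IsProb π)
    (hπf : FullSupport π) : 2 * Bhat μ π ∈ LBSet μ π M := by
  refine ⟨π, hπ, ?_, rfl⟩
  have := bhat_nonneg hμ hπ
  have := neg_log_iInf_nonneg hπ hπf
  have := cast_sub_one_pos hM
  rw [kl_self hπf]
  positivity

theorem exists_isLeast_LBSet [Nonempty 𝓨] (hM : 2 ≤ M) (hμ : IsProb μ) (hπ : IsProb π)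
    (hμf : FullSupport μ) (hπf : FullSupport π) : ∃ L, IsLeast (LBSet μ π M) L := by
  set s := stdSimplex ℝ 𝓨 ∩
    {q | KL q π ≤ (1 / ((M : ℝ) - 1)) * (2 * Bhat μ π + (- Real.log (⨅ y, π y)))}
  have hLB : LBSet μ π M = (fun q => 2 * Bhat μ q) '' s := by
    ext x
    constructor
    · rintro ⟨q, hq, hKL, rfl⟩
      exact ⟨q, ⟨hq, hKL⟩, rfl⟩
    · rintro ⟨q, ⟨hq, hKL⟩, rfl⟩
      exact ⟨q, hq, hKL, rfl⟩
  have hs : IsCompact s :=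
    (isCompact_stdSimplex ℝ 𝓨).inter_right (isClosed_le (continuous_kl_left hπf) continuous_const)
  have hcont : ContinuousOn (fun q => 2 * Bhat μ q) s :=
    (continuousOn_const.mul (continuousOn_bhat hμf)).mono Set.inter_subset_left
  have hne : (LBSet μ π M).Nonempty := ⟨_, two_mul_bhat_mem_LBSet hM hμ hπ hπf⟩
  rw [hLB] at hne ⊢
  exact (hs.image_of_continuousOn hcont).exists_isLeast hne

lemma isProb_of_mem_pi {q : ℕ → 𝓨 → ℝ}
    (hq : q ∈ Set.univ.pi fun j => if j < M then stdSimplex ℝ 𝓨 else {0}) {j : ℕ} (hj : j < M) :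
    IsProb (q j) := by
  have hqj := hq j (Set.mem_univ j)
  simp only [hj, if_true] at hqj
  exact hqj

variable (M) in
/-- Truncating at `M` makes the feasible set of `V*(M)` compact in `ℕ → 𝓨 → ℝ`. -/
def feasibleTuples : Set (ℕ → 𝓨 → ℝ) :=
  {q ∈ Set.univ.pi fun j => if j < M then stdSimplex ℝ 𝓨 else {0} |
    jensenShannon (range M \ {1}) ((M : ℝ) - 1) q ≤ jensenShannon (range M \ {0}) ((M : ℝ) - 1) q}

theorem isCompact_feasibleTuples (hM : 2 ≤ M) : IsCompact (feasibleTuples (𝓨 := 𝓨) M) := by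
  have hP : IsCompact (Set.univ.pi fun j => if j < M then stdSimplex ℝ 𝓨 else {0}) :=
    isCompact_univ_pi fun j => by
      split_ifs
      exacts [isCompact_stdSimplex ℝ 𝓨, isCompact_singleton]
  have hnonneg : ∀ i, (Set.univ.pi fun j => if j < M then stdSimplex ℝ 𝓨 else {0}) ⊆
      {q | ∀ j ∈ range M \ {i}, ∀ y, 0 ≤ q j y} := fun i q hq j hj y => by
    have hjM := mem_range.1 (mem_sdiff.1 hj).1
    exact (isProb_of_mem_pi hq hjM).1 y
  exact hP.of_isClosed_subset (hP.isClosed.isClosed_le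
    ((continuousOn_jensenShannon (cast_sub_one_pos hM)).mono (hnonneg 1))
    ((continuousOn_jensenShannon (cast_sub_one_pos hM)).mono (hnonneg 0))) (Set.sep_subset _ _)

theorem VstarSet_eq_image (hM : 0 < M) :
    VstarSet μ π M =
      (fun q => KL (q 0) μ + ∑ j ∈ range M \ {0}, KL (q j) π) '' feasibleTuples M := by
  ext x
  constructor
  · rintro ⟨q, hq, hcon, rfl⟩
    set q' : ℕ → 𝓨 → ℝ := fun j => if j < M then q j else 0
    have hq' : ∀ i, ∀ j ∈ range M \ {i}, q j = q' j := fun i j hj =>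
      (if_pos (mem_range.1 (mem_sdiff.1 hj).1)).symm
    refine ⟨q', ⟨fun j _ => ?_, ?_⟩, ?_⟩
    · by_cases hj : j < M
      · simp only [q', hj, if_true]
        exact hq j hj
      · simp [q', hj]
    · rw [← jensenShannon_congr (hq' 0), ← jensenShannon_congr (hq' 1)]
      exact hcon
    · simp only [q', if_pos hM, sum_congr rfl fun j hj => congrArg (KL · π) (hq' 0 j hj).symm]
  · rintro ⟨q, ⟨hqP, hcon⟩, rfl⟩
    exact ⟨q, fun j hj => isProb_of_mem_pi hqP hj, hcon, rfl⟩

theorem exists_isLeast_VstarSet (hM : 2 ≤ M) (hπ : IsProb π) (hμf : FullSupport μ)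
    (hπf : FullSupport π) : ∃ V, IsLeast (VstarSet μ π M) V := by
  have hconst : ∀ i < M, jensenShannon (range M \ {i}) ((M : ℝ) - 1) (fun _ => π) = 0 :=
    fun i hi => jensenShannon_const hπf (cast_card_range_sdiff_singleton hi)
      (cast_sub_one_pos hM).ne'
  have hne : (VstarSet μ π M).Nonempty :=
    ⟨_, fun _ => π, fun _ _ => hπ, ((hconst 1 (by omega)).trans (hconst 0 (by omega)).symm).le,
      rfl⟩
  have hcont : Continuous fun q : ℕ → 𝓨 → ℝ => KL (q 0) μ + ∑ j ∈ range M \ {0}, KL (q j) π :=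
    ((continuous_kl_left hμf).comp (continuous_apply 0)).add
      (continuous_finsetSum _ fun j _ => (continuous_kl_left hπf).comp (continuous_apply j))
  rw [VstarSet_eq_image (by omega)] at hne ⊢
  exact ((isCompact_feasibleTuples hM).image hcont).exists_isLeast hne

lemma isProb_of_mem_range_sdiff {q : ℕ → 𝓨 → ℝ} (hq : ∀ j < M, IsProb (q j)) {i : ℕ} :
    ∀ j ∈ range M \ {i}, IsProb (q j) := fun j hj =>
  hq j (mem_range.1 (mem_sdiff.1 hj).1)

theorem two_mul_bhat_mix_le (hM : 2 ≤ M) (hπ : IsProb π) (hμf : FullSupport μ)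
    (hπf : FullSupport π) {q : ℕ → 𝓨 → ℝ} (hq : ∀ j < M, IsProb (q j))
    (hcon : jensenShannon (range M \ {1}) ((M : ℝ) - 1) q ≤
      jensenShannon (range M \ {0}) ((M : ℝ) - 1) q) :
    2 * Bhat μ (mix (range M \ {1}) ((M : ℝ) - 1) q) ≤
      KL (q 0) μ + ∑ j ∈ range M \ {0}, KL (q j) π := by
  have hc := cast_sub_one_pos hM
  have h0B : 0 ∈ range M \ {1} := by simp; omega
  have hprob := fun i => isProb_of_mem_range_sdiff (i := i) hq
  calc 2 * Bhat μ (mix (range M \ {1}) ((M : ℝ) - 1) q)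
      ≤ KL (q 0) μ + KL (q 0) (mix (range M \ {1}) ((M : ℝ) - 1) q) :=
        two_mul_bhat_le_kl_add_kl hμf (hq 0 (by omega))
          (isProb_mix (hprob 1) (cast_card_range_sdiff_singleton hM) hc)
          (mix_ne_zero (fun k hk => (hprob 1 k hk).1) hc h0B)
    _ ≤ KL (q 0) μ + jensenShannon (range M \ {1}) ((M : ℝ) - 1) q := by
        gcongr
        exact kl_le_jensenShannon (hprob 1) (cast_card_range_sdiff_singleton hM) hc h0B
    _ ≤ KL (q 0) μ + jensenShannon (range M \ {0}) ((M : ℝ) - 1) q := by gcongr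
    _ ≤ KL (q 0) μ + ∑ j ∈ range M \ {0}, KL (q j) π := by
        have hcomp := sum_kl_eq_jensenShannon_add (fun j hj => (hprob 0 j hj).1) hc hπf
        have hmix := kl_nonneg (isProb_mix (hprob 0) (cast_card_range_sdiff_singleton
          (by omega)) hc) hπ.1 hπ.2.le fun y _ => (hπf y).ne'
        nlinarith

theorem mul_kl_mix_le [Nonempty 𝓨] (hM : 2 ≤ M) (hπ : IsProb π) (hπf : FullSupport π)
    {q : ℕ → 𝓨 → ℝ} (hq : ∀ j < M, IsProb (q j)) :
    ((M : ℝ) - 1) * KL (mix (range M \ {1}) ((M : ℝ) - 1) q) π ≤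
      -Real.log (⨅ y, π y) + ∑ j ∈ range M \ {0}, KL (q j) π := by
  have hc := cast_sub_one_pos hM
  have h0B : 0 ∈ range M \ {1} := by simp; omega
  have hprob := fun i => isProb_of_mem_range_sdiff (i := i) hq
  have hcomp := sum_kl_eq_jensenShannon_add (fun j hj => (hprob 1 j hj).1) hc hπf
  have hjs := jensenShannon_nonneg (hprob 1) (cast_card_range_sdiff_singleton hM) hc
  have hsplit := add_sum_erase _ (fun j => KL (q j) π) h0B
  have hrest : ∑ j ∈ (range M \ {1}).erase 0, KL (q j) π ≤ ∑ j ∈ range M \ {0}, KL (q j) π := by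
    refine sum_le_sum_of_subset_of_nonneg (fun j hj => ?_) fun j hj _ =>
      kl_nonneg (hprob 0 j hj) hπ.1 hπ.2.le fun y _ => (hπf y).ne'
    simp only [Finset.mem_erase, Finset.mem_sdiff, Finset.mem_singleton] at hj ⊢
    exact ⟨hj.2.1, hj.1⟩
  have hq0π := kl_le_neg_log_iInf (hq 0 (by omega)) hπf
  linarith

theorem exists_mem_LBSet_le [Nonempty 𝓨] (hM : 2 ≤ M) (hμ : IsProb μ) (hπ : IsProb π)
    (hμf : FullSupport μ) (hπf : FullSupport π) {x : ℝ} (hx : x ∈ VstarSet μ π M) :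
    ∃ l ∈ LBSet μ π M, l ≤ x := by
  obtain ⟨q, hq, hcon, rfl⟩ := hx
  by_cases hπx : 2 * Bhat μ π ≤ KL (q 0) μ + ∑ j ∈ range M \ {0}, KL (q j) π
  · exact ⟨_, two_mul_bhat_mem_LBSet hM hμ hπ hπf, hπx⟩
  refine ⟨_, ⟨mix (range M \ {1}) ((M : ℝ) - 1) q, ?_, ?_, rfl⟩,
    two_mul_bhat_mix_le hM hπ hμf hπf hq hcon⟩
  · exact isProb_mix (isProb_of_mem_range_sdiff hq) (cast_card_range_sdiff_singleton hM)
      (cast_sub_one_pos hM)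
  · have hq0μ := kl_nonneg (hq 0 (by omega)) hμ.1 hμ.2.le fun y _ => (hμf y).ne'
    have hmix := mul_kl_mix_le hM hπ hπf hq
    rw [one_div_mul_eq_div, le_div_iff₀ (cast_sub_one_pos hM)]
    linarith

end Optimization

theorem statement10_general (𝓨 : Type) [Fintype 𝓨] [Nonempty 𝓨]
    (M : ℕ) (hM : 3 ≤ M)
    (μ π : 𝓨 → ℝ) (hμ : IsProb μ) (hπ : IsProb π)
    (hμf : FullSupport μ) (hπf : FullSupport π) :
    ∃ V L : ℝ, IsLeast (VstarSet μ π M) V ∧ IsLeast (LBSet μ π M) L ∧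
      L ≤ V := by
  have hM2 : 2 ≤ M := by omega
  obtain ⟨V, hV⟩ := exists_isLeast_VstarSet hM2 hπ hμf hπf
  obtain ⟨L, hL⟩ := exists_isLeast_LBSet hM2 hμ hπ hμf hπf
  obtain ⟨l, hl, hlV⟩ := exists_mem_LBSet_le hM2 hμ hπ hμf hπf hV.1
  exact ⟨V, L, hV, hL, (hL.2 hl).trans hlV⟩

/-- lower bound in Theorem 3. `V*(M) ≥ LB(M)`, where
`V*(M)` is the minimum of the optimization problem in Theorem 2 and `LB(M)`
is the minimum of `2B(μ,q)` over `q` with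
`D(q‖π) ≤ (2B(μ,π) + C_π)/(M-1)`, `C_π = -log min_y π(y)`. -/
theorem statement10 (𝓨 : Type) [Fintype 𝓨] [Nonempty 𝓨]
    (M : ℕ) (hM : 3 ≤ M)
    (μ π : 𝓨 → ℝ) (hμ : IsProb μ) (hπ : IsProb π)
    (hμf : FullSupport μ) (hπf : FullSupport π) (hne : μ ≠ π) :
    ∃ V L : ℝ, IsLeast (VstarSet μ π M) V ∧ IsLeast (LBSet μ π M) L ∧
      L ≤ V :=
  statement10_general 𝓨 M hM μ π hμ hπ hμf hπf
end
end

section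
/- (Proposition 4.) Suppose |𝒴| ≥ 2. Fix M ≥ 3 and a full-support probability distribution π on 𝒴. There does not exist a sequence of tests δ_n : (𝒴^M)^n → {0, 1, …, M} (which may depend on π) such that for every full-support probability distribution μ ≠ π on 𝒴, liminf_{n→∞} −(1/n) log max_{i ∈ {0,1,…,M}} P_i{ y : δ_n(y) ≠ i } > 0. That is, when the null hypothesis with no outlier is included, there cannot exist a universally exponentially consistent test even when the typical distribution is known. -/
/-!
The null distribution does not involve `μ`, so any single alternative `μ₀` already forces the
null error `P₀(δₙ ≠ 0)` to decay at some fixed rate `c > 0`. Now take `ν ≠ π` with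
`ν ≤ exp (c / 2) • π`: the likelihood ratio of hypothesis `1` (outlier `ν`) against the null is
at most `exp (c n / 2)`, so `P₁(δₙ ≠ 0) ≤ exp (- c n / 2)`. Under hypothesis `1` the test thus
answers `0` with probability tending to `1`, and the error exponent for `ν` is `0`.
-/

open Filter Finset Topology

noncomputable section

/-- Joint pmf in the at-most-one-outlier model: hypothesis `i : Fin (M+1)`,
where `i = 0` is the null hypothesis (no outlier) and `i = j+1` means
coordinate `j` is the outlier. -/
def pAtMost {𝓨 : Type} [Fintype 𝓨] {M n : ℕ} (μ π : 𝓨 → ℝ) (i : Fin (M+1))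
    (y : Fin n → Fin M → 𝓨) : ℝ :=
  ∏ k, ∏ j : Fin M, (if (j : ℕ) + 1 = (i : ℕ) then μ else π) (y k j)

section Prob

variable {α : Type} [Fintype α] {P Q : α → ℝ}

lemma probOf_mono (hP : ∀ y, 0 ≤ P y) {A B : Set α} (hAB : A ⊆ B) : probOf P A ≤ probOf P B :=
  sum_le_sum fun y _ => Set.indicator_le_indicator_of_subset hAB hP y

lemma probOf_compl (hP : ∑ y, P y = 1) (A : Set α) : probOf P Aᶜ = 1 - probOf P A := by
  simp [probOf, Set.indicator_compl, sum_sub_distrib, hP]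

lemma probOf_le_mul_probOf {c : ℝ} (hPQ : ∀ y, P y ≤ c * Q y) (A : Set α) :
    probOf P A ≤ c * probOf Q A := by
  rw [probOf, probOf, mul_sum]
  refine sum_le_sum fun y _ => ?_
  by_cases hy : y ∈ A <;> simp [hy, hPQ]

end Prob

lemma prod_outlier_le {𝓨 : Type} {M : ℕ} {μ π : 𝓨 → ℝ} {r : ℝ} (hμ : ∀ s, 0 ≤ μ s)
    (hπ : ∀ s, 0 ≤ π s) (hr : 1 ≤ r) (hμr : ∀ s, μ s ≤ r * π s) (i : Fin (M + 1))
    (v : Fin M → 𝓨) :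
    ∏ j : Fin M, (if (j : ℕ) + 1 = (i : ℕ) then μ else π) (v j) ≤ r * ∏ j, π (v j) := by
  classical
  have hcard : #{j : Fin M | (j : ℕ) + 1 = i} ≤ 1 :=
    card_le_one.mpr fun a ha b hb => Fin.ext (by simp at ha hb; omega)
  have hfactors : ∏ j : Fin M, (if (j : ℕ) + 1 = (i : ℕ) then r else 1) ≤ r := by
    rw [prod_ite, prod_const, prod_const_one, mul_one]
    simpa using pow_le_pow_right₀ hr hcard
  calc ∏ j : Fin M, (if (j : ℕ) + 1 = (i : ℕ) then μ else π) (v j)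
      ≤ ∏ j : Fin M, (if (j : ℕ) + 1 = (i : ℕ) then r else 1) * π (v j) := by
        refine prod_le_prod (fun j _ => ?_) fun j _ => ?_ <;> split_ifs
        exacts [hμ _, hπ _, hμr _, (one_mul _).ge]
    _ = (∏ j : Fin M, if (j : ℕ) + 1 = (i : ℕ) then r else 1) * ∏ j, π (v j) := prod_mul_distrib
    _ ≤ r * ∏ j, π (v j) := mul_le_mul_of_nonneg_right hfactors (prod_nonneg fun _ _ => hπ _)

section Model

variable {𝓨 : Type} [Fintype 𝓨] {M n : ℕ}

lemma pAtMost_zero (μ π : 𝓨 → ℝ) (y : Fin n → Fin M → 𝓨) :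
    pAtMost μ π 0 y = ∏ k, ∏ j, π (y k j) := by
  simp [pAtMost]

lemma pAtMost_nonneg {μ π : 𝓨 → ℝ} (hμ : ∀ s, 0 ≤ μ s) (hπ : ∀ s, 0 ≤ π s)
    (i : Fin (M + 1)) (y : Fin n → Fin M → 𝓨) : 0 ≤ pAtMost μ π i y :=
  prod_nonneg fun _ _ => prod_nonneg fun _ _ => by split_ifs <;> solve_by_elim

lemma sum_pAtMost {μ π : 𝓨 → ℝ} (hμ : ∑ s, μ s = 1) (hπ : ∑ s, π s = 1) (i : Fin (M + 1)) :
    ∑ y : Fin n → Fin M → 𝓨, pAtMost μ π i y = 1 := by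
  have hq : ∀ j : Fin M, ∑ s, (if (j : ℕ) + 1 = (i : ℕ) then μ else π) s = 1 := fun j => by
    split_ifs <;> assumption
  unfold pAtMost
  rw [← Fintype.prod_sum fun (_ : Fin n) (v : Fin M → 𝓨) =>
    ∏ j : Fin M, (if (j : ℕ) + 1 = (i : ℕ) then μ else π) (v j)]
  refine prod_eq_one fun _ _ => ?_
  rw [← Fintype.prod_sum fun (j : Fin M) (s : 𝓨) => (if (j : ℕ) + 1 = (i : ℕ) then μ else π) s]
  exact prod_eq_one fun j _ => hq j

lemma pAtMost_le_pow_mul_pAtMost_zero {μ π : 𝓨 → ℝ} {r : ℝ} (hμ : ∀ s, 0 ≤ μ s)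
    (hπ : ∀ s, 0 ≤ π s) (hr : 1 ≤ r) (hμr : ∀ s, μ s ≤ r * π s) (i : Fin (M + 1))
    (y : Fin n → Fin M → 𝓨) : pAtMost μ π i y ≤ r ^ n * pAtMost μ π 0 y := by
  rw [pAtMost_zero, ← Fin.prod_const n r, ← prod_mul_distrib]
  exact prod_le_prod (fun k _ => prod_nonneg fun j _ => by split_ifs <;> solve_by_elim)
    fun k _ => prod_outlier_le hμ hπ hr hμr i (y k)

end Model

lemma exists_isProb_ne_le_mul {𝓨 : Type} [Fintype 𝓨] (hcard : 1 < Fintype.card 𝓨)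
    {π : 𝓨 → ℝ} (hπ : ∑ s, π s = 1) (hπf : FullSupport π) {r : ℝ} (hr : 1 < r) :
    ∃ ν : 𝓨 → ℝ, IsProb ν ∧ FullSupport ν ∧ ν ≠ π ∧ ∀ s, ν s ≤ r * π s := by
  classical
  obtain ⟨a, b, hab⟩ := Fintype.exists_pair_of_one_lt_card hcard
  set t := min (π b / 2) ((r - 1) * π a)
  have ht : 0 < t := lt_min (half_pos (hπf b)) (mul_pos (sub_pos.2 hr) (hπf a))
  have htb : t < π b := (min_le_left _ _).trans_lt (half_lt_self (hπf b))
  have hta : t ≤ (r - 1) * π a := min_le_right _ _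
  set ν : 𝓨 → ℝ := fun s => π s + (if s = a then t else 0) - (if s = b then t else 0)
  have hνf : FullSupport ν := fun s => by
    have := hπf s
    dsimp only [ν]
    split_ifs with hsa hsb <;> subst_vars <;> first | exact absurd rfl hab | linarith
  refine ⟨ν, ⟨fun s => (hνf s).le, ?_⟩, hνf, fun h => ?_, fun s => ?_⟩
  · simp [ν, sum_add_distrib, sum_sub_distrib, hπ]
  · simpa [ν, hab, ht.ne'] using congrFun h a
  · have := hπf s
    dsimp only [ν]
    split_ifs with hsa hsb <;> subst_vars <;> nlinarith

lemma exists_eventually_lt_exp_of_liminf_pos {a : ℕ → ℝ}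
    (h : 0 < liminf (fun n : ℕ => -(1 / (n : ℝ)) * Real.log (a n)) atTop) :
    ∃ c > 0, ∀ᶠ n : ℕ in atTop, a n < Real.exp (-(c * n)) := by
  set L := liminf (fun n : ℕ => -(1 / (n : ℝ)) * Real.log (a n)) atTop
  -- on `ℝ` a liminf that is not bounded below is the junk value `0`
  have hbdd : IsBoundedUnder (· ≥ ·) atTop fun n : ℕ => -(1 / (n : ℝ)) * Real.log (a n) := by
    by_contra hunb
    exact h.ne' (Real.liminf_of_not_isBoundedUnder hunb)
  refine ⟨L / 2, half_pos h, ?_⟩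
  filter_upwards [eventually_lt_of_lt_liminf (half_lt_self h) hbdd, eventually_gt_atTop 0]
    with n hn hn0
  rcases le_or_gt (a n) 0 with ha | ha
  · exact ha.trans_lt (Real.exp_pos _)
  have hn0' : (0 : ℝ) < n := Nat.cast_pos.2 hn0
  have hlog : Real.log (a n) < -(L / 2 * n) := by
    have := mul_lt_mul_of_pos_right hn hn0'
    rw [show -(1 / (n : ℝ)) * Real.log (a n) * n = -Real.log (a n) by field_simp] at this
    linarith
  simpa [Real.exp_log ha] using Real.exp_lt_exp.2 hlog

lemma eventually_exp_neg_mul_lt {c ε : ℝ} (hc : 0 < c) (hε : 0 < ε) :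
    ∀ᶠ n : ℕ in atTop, Real.exp (-(c * n)) < ε :=
  (Real.tendsto_exp_neg_atTop_nhds_zero.comp
    (tendsto_natCast_atTop_atTop.const_mul_atTop hc)).eventually (gt_mem_nhds hε)

lemma one_sub_pow_mul_null_error_le {𝓨 : Type} [Fintype 𝓨] {M n : ℕ} {μ π : 𝓨 → ℝ} {r : ℝ}
    (hμ : IsProb μ) (hπ : IsProb π) (hr : 1 ≤ r) (hμr : ∀ s, μ s ≤ r * π s)
    (δ : (Fin n → Fin M → 𝓨) → Fin (M + 1)) {i : Fin (M + 1)} (hi : i ≠ 0) :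
    1 - r ^ n * probOf (pAtMost μ π 0) {y | δ y ≠ 0} ≤ probOf (pAtMost μ π i) {y | δ y ≠ i} :=
  calc 1 - r ^ n * probOf (pAtMost μ π 0) {y | δ y ≠ 0}
      ≤ 1 - probOf (pAtMost μ π i) {y | δ y ≠ 0} :=
        sub_le_sub_left (probOf_le_mul_probOf
          (pAtMost_le_pow_mul_pAtMost_zero hμ.1 hπ.1 hr hμr i) _) 1
    _ = probOf (pAtMost μ π i) {y | δ y ≠ 0}ᶜ := (probOf_compl (sum_pAtMost hμ.2 hπ.2 i) _).symm
    _ ≤ probOf (pAtMost μ π i) {y | δ y ≠ i} :=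
        probOf_mono (pAtMost_nonneg hμ.1 hπ.1 i) fun y (hy : ¬δ y ≠ 0) =>
          (not_not.1 hy).trans_ne hi.symm

/-- Proposition 4.  In the at-most-one-outlier model with a
known typical distribution `π`, there is no sequence of tests that is
universally exponentially consistent: no `δ` achieves a strictly positive
exponent of the maximal error probability simultaneously for every full-support
outlier distribution `μ ≠ π`. -/
theorem statement13 (𝓨 : Type) [Fintype 𝓨] (hcard : 2 ≤ Fintype.card 𝓨)
    (M : ℕ) (hM : 3 ≤ M)
    (π : 𝓨 → ℝ) (hπ : IsProb π) (hπf : FullSupport π) :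
    ¬ ∃ δ : (n : ℕ) → (Fin n → Fin M → 𝓨) → Fin (M + 1),
      ∀ μ : 𝓨 → ℝ, IsProb μ → FullSupport μ → μ ≠ π →
        0 < Filter.liminf (fun n : ℕ =>
            -(1 / (n : ℝ)) * Real.log
              (⨆ i : Fin (M + 1), probOf (pAtMost μ π i) {y | δ n y ≠ i}))
          atTop := by
  rintro ⟨δ, hδ⟩
  obtain ⟨μ₀, hμ₀, hμ₀f, hμ₀π, -⟩ := exists_isProb_ne_le_mul hcard hπ.2 hπf one_lt_two
  obtain ⟨c, hc, hnull⟩ := exists_eventually_lt_exp_of_liminf_pos (hδ μ₀ hμ₀ hμ₀f hμ₀π)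
  obtain ⟨ν, hν, hνf, hνπ, hνr⟩ :=
    exists_isProb_ne_le_mul hcard hπ.2 hπf (Real.one_lt_exp_iff.2 (half_pos hc))
  obtain ⟨c', hc', hνerr⟩ := exists_eventually_lt_exp_of_liminf_pos (hδ ν hν hνf hνπ)
  obtain ⟨n, hn, hνn, hsmall, hsmall'⟩ := (hnull.and <| hνerr.and <|
    (eventually_exp_neg_mul_lt (half_pos hc) one_half_pos).and
    (eventually_exp_neg_mul_lt hc' one_half_pos)).exists
  have hbdd {μ : 𝓨 → ℝ} : BddAbove (Set.range fun i : Fin (M + 1) =>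
      probOf (pAtMost μ π i) {y | δ n y ≠ i}) := (Set.finite_range _).bddAbove
  have hνnull : probOf (pAtMost ν π 0) {y | δ n y ≠ 0} < Real.exp (-(c * n)) := by
    rw [show pAtMost ν π 0 = pAtMost μ₀ π 0 from funext fun y => by simp only [pAtMost_zero]]
    exact (le_ciSup hbdd 0).trans_lt hn
  have hi : (⟨0, by omega⟩ : Fin M).succ ≠ 0 := Fin.succ_ne_zero _
  have herr := (one_sub_pow_mul_null_error_le hν hπ (Real.one_le_exp (half_pos hc).le) hνr
    (δ n) hi).trans (le_ciSup hbdd _)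
  have hratio : Real.exp (c / 2) ^ n * probOf (pAtMost ν π 0) {y | δ n y ≠ 0}
      ≤ Real.exp (-(c / 2 * n)) := by
    calc _ ≤ Real.exp (c / 2) ^ n * Real.exp (-(c * n)) := by gcongr
      _ = Real.exp (-(c / 2 * n)) := by rw [← Real.exp_nat_mul, ← Real.exp_add]; ring_nf
  linarith
end
end

section
/- For any two full-support probability distributions μ ≠ π on 𝒴, the Chernoff information between the two product distributions μ⊗π and π⊗μ on 𝒴×𝒴 equals twice the Bhattacharyya distance between μ and π: C( μ(y)π(y') , π(y)μ(y') ) = 2·B(μ, π). -/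
open Filter Finset Topology

noncomputable section

/-- Chernoff information `C(p,q) = sup_{s ∈ [0,1]} -log ∑ (p y)^s (q y)^(1-s)`. -/
def Chernoff {𝓨 : Type} [Fintype 𝓨] (p q : 𝓨 → ℝ) : ℝ :=
  ⨆ s : Set.Icc (0:ℝ) 1, - Real.log (∑ y, p y ^ (s : ℝ) * q y ^ (1 - (s : ℝ)))

/-!
The Chernoff coefficient `c(s) = ∑ μ^s π^(1-s)` of the swapped product pair factors as
`c(s) c(1-s)`, and by Cauchy–Schwarz `c(1/2)² ≤ c(s) c(1-s)`, where `c(1/2)` is the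
Bhattacharyya coefficient. Hence `-log` of the product coefficient is maximised on `[0,1]` at
`s = 1/2`, with value `-2 log c(1/2) = 2 B(μ,π)`.
-/

section ChernoffCoeff

variable {𝓧 𝓨 : Type} [Fintype 𝓧] [Fintype 𝓨]

def chernoffCoeff (p q : 𝓨 → ℝ) (s : ℝ) : ℝ :=
  ∑ y, p y ^ s * q y ^ (1 - s)

theorem chernoffCoeff_pos [Nonempty 𝓨] {p q : 𝓨 → ℝ} (hp : ∀ y, 0 < p y) (hq : ∀ y, 0 < q y)
    (s : ℝ) : 0 < chernoffCoeff p q s :=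
  Finset.sum_pos (fun y _ => by have := hp y; have := hq y; positivity) Finset.univ_nonempty

theorem chernoffCoeff_nonneg {p q : 𝓨 → ℝ} (hp : ∀ y, 0 ≤ p y) (hq : ∀ y, 0 ≤ q y) (s : ℝ) :
    0 ≤ chernoffCoeff p q s :=
  Finset.sum_nonneg fun y _ => by have := hp y; have := hq y; positivity

theorem chernoffCoeff_comm (p q : 𝓨 → ℝ) (s : ℝ) :
    chernoffCoeff q p s = chernoffCoeff p q (1 - s) := by
  simp only [chernoffCoeff, sub_sub_cancel, mul_comm]

theorem chernoffCoeff_prod {p₁ q₁ : 𝓧 → ℝ} {p₂ q₂ : 𝓨 → ℝ} (hp₁ : ∀ x, 0 ≤ p₁ x)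
    (hq₁ : ∀ x, 0 ≤ q₁ x) (hp₂ : ∀ y, 0 ≤ p₂ y) (hq₂ : ∀ y, 0 ≤ q₂ y) (s : ℝ) :
    chernoffCoeff (fun z : 𝓧 × 𝓨 => p₁ z.1 * p₂ z.2) (fun z => q₁ z.1 * q₂ z.2) s
      = chernoffCoeff p₁ q₁ s * chernoffCoeff p₂ q₂ s := by
  simp only [chernoffCoeff, Fintype.sum_prod_type, Finset.sum_mul_sum]
  refine Finset.sum_congr rfl fun x _ => Finset.sum_congr rfl fun y _ => ?_
  rw [Real.mul_rpow (hp₁ x) (hp₂ y), Real.mul_rpow (hq₁ x) (hq₂ y)]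
  ring

theorem chernoffCoeff_half (p q : 𝓨 → ℝ) :
    chernoffCoeff p q (1 / 2) = ∑ y, √(p y) * √(q y) := by
  simp only [chernoffCoeff, Real.sqrt_eq_rpow]
  norm_num

theorem chernoffCoeff_half_sq_le {p q : 𝓨 → ℝ} (hp : ∀ y, 0 ≤ p y) (hq : ∀ y, 0 ≤ q y)
    (s : ℝ) : chernoffCoeff p q (1 / 2) ^ 2 ≤ chernoffCoeff p q s * chernoffCoeff p q (1 - s) := by
  have hterm : ∀ y, √(p y ^ s * q y ^ (1 - s)) * √(p y ^ (1 - s) * q y ^ (1 - (1 - s)))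
      = √(p y) * √(q y) := by
    intro y
    rw [← Real.sqrt_mul (by have := hp y; have := hq y; positivity), ← Real.sqrt_mul (hp y)]
    congr 1
    rw [show p y * q y = p y ^ (s + (1 - s)) * q y ^ ((1 - s) + (1 - (1 - s))) by norm_num,
      Real.rpow_add' (hp y) (by norm_num), Real.rpow_add' (hq y) (by norm_num)]
    ring
  have hCS : ∑ y, √(p y) * √(q y) ≤ √(chernoffCoeff p q s) * √(chernoffCoeff p q (1 - s)) := by
    have h := Real.sum_sqrt_mul_sqrt_le Finset.univ
      (fun y => by have := hp y; have := hq y; positivity : ∀ y, 0 ≤ p y ^ s * q y ^ (1 - s))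
      (fun y => by have := hp y; have := hq y; positivity :
        ∀ y, 0 ≤ p y ^ (1 - s) * q y ^ (1 - (1 - s)))
    rwa [Finset.sum_congr rfl fun y _ => hterm y] at h
  rw [chernoffCoeff_half]
  calc (∑ y, √(p y) * √(q y)) ^ 2
      ≤ (√(chernoffCoeff p q s) * √(chernoffCoeff p q (1 - s))) ^ 2 :=
        pow_le_pow_left₀ (Finset.sum_nonneg fun y _ => by positivity) hCS 2
    _ = chernoffCoeff p q s * chernoffCoeff p q (1 - s) := by
        rw [mul_pow, Real.sq_sqrt (chernoffCoeff_nonneg hp hq s),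
          Real.sq_sqrt (chernoffCoeff_nonneg hp hq (1 - s))]

theorem chernoff_eq_of_isMaxOn {p q : 𝓨 → ℝ} {s₀ : ℝ} (hs₀ : s₀ ∈ Set.Icc (0 : ℝ) 1)
    (h : IsMaxOn (fun s => -Real.log (chernoffCoeff p q s)) (Set.Icc 0 1) s₀) :
    Chernoff p q = -Real.log (chernoffCoeff p q s₀) :=
  h.iSup_eq hs₀

end ChernoffCoeff

theorem statement14_general (𝓨 : Type) [Fintype 𝓨] [Nonempty 𝓨]
    (μ π : 𝓨 → ℝ)
    (hμf : FullSupport μ) (hπf : FullSupport π) :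
    Chernoff (fun z : 𝓨 × 𝓨 => μ z.1 * π z.2) (fun z : 𝓨 × 𝓨 => π z.1 * μ z.2)
      = 2 * Bhat μ π := by
  have hμ : ∀ y, 0 ≤ μ y := fun y => (hμf y).le
  have hπ : ∀ y, 0 ≤ π y := fun y => (hπf y).le
  have hswap : ∀ s, chernoffCoeff (fun z : 𝓨 × 𝓨 => μ z.1 * π z.2) (fun z => π z.1 * μ z.2) s
      = chernoffCoeff μ π s * chernoffCoeff μ π (1 - s) := fun s => by
    rw [chernoffCoeff_prod hμ hπ hπ hμ, chernoffCoeff_comm μ π]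
  have hhalf_pos := chernoffCoeff_pos hμf hπf (1 / 2)
  have hhalf : (1 : ℝ) - 1 / 2 = 1 / 2 := by norm_num
  have hmax : IsMaxOn (fun s => -Real.log (chernoffCoeff (fun z : 𝓨 × 𝓨 => μ z.1 * π z.2)
      (fun z => π z.1 * μ z.2) s)) (Set.Icc 0 1) (1 / 2) := fun s _ => by
    simp only [Set.mem_ofPred_eq, hswap, hhalf, ← sq, neg_le_neg_iff]
    exact Real.log_le_log (by positivity) (chernoffCoeff_half_sq_le hμ hπ s)
  rw [chernoff_eq_of_isMaxOn (by norm_num) hmax, hswap, hhalf,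
    Real.log_mul hhalf_pos.ne' hhalf_pos.ne', Bhat, ← chernoffCoeff_half]
  ring

/-- `C(μ⊗π, π⊗μ) = 2·B(μ,π)` for full-support `μ ≠ π`. -/
theorem statement14 (𝓨 : Type) [Fintype 𝓨] [Nonempty 𝓨]
    (μ π : 𝓨 → ℝ) (hμ : IsProb μ) (hπ : IsProb π)
    (hμf : FullSupport μ) (hπf : FullSupport π) (hne : μ ≠ π) :
    Chernoff (fun z : 𝓨 × 𝓨 => μ z.1 * π z.2) (fun z : 𝓨 × 𝓨 => π z.1 * μ z.2)
      = 2 * Bhat μ π :=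
  statement14_general 𝓨 μ π hμf hπf
end
end
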